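/- Let G = (V,E) be a finite connected simple graph, s ∈ V, and R ≥ 0 an integer. Let c : V → ℤ/4ℤ and b : V → {↑, ↓} be functions such that b(s) = ↓ and, for every pair of adjacent vertices u, v with dist(s,v) = dist(s,u) + 1 ≤ R, the triple (b(u), b(v), c(v)) belongs to {(↑, ↑, c(u)), (↓, ↑, c(u)), (↓, ↑, c(u)−1), (↓, ↓, c(u))}. Then for every vertex u with δ := dist(s,u) ≤ R and every shortest path s = s_0, s_1, …, s_δ = u from s to u (consecutive vertices adjacent and dist(s, s_ℓ) = ℓ for all ℓ), there exists an integer a with 0 ≤ a ≤ δ such that: (1) for every ℓ ∈ {0, …, a}, (b(s_ℓ), c(s_ℓ)) = (↓, c(s)); and (2) there exists c' ∈ {c(s)−1, c(s)} such that for every ℓ ∈ {a+1, …, δ}, (b(s_ℓ), c(s_ℓ)) = (↑, c'). -/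
import Mathlib


/-- The two possible values of the 'arrow' label. -/
inductive Arrow : Type
  | up : Arrow
  | down : Arrow
deriving DecidableEq

theorem stmt10 {V : Type*} [Fintype V] (G : SimpleGraph V) (hG : G.Connected)
    (s : V) (R : ℕ) (c : V → ZMod 4) (b : V → Arrow)
    (hbs : b s = Arrow.down)
    (hcoh : ∀ u v : V, G.Adj u v → G.dist s v = G.dist s u + 1 → G.dist s v ≤ R →
      (b u, b v, c v) ∈ ({(Arrow.up, Arrow.up, c u), (Arrow.down, Arrow.up, c u),
        (Arrow.down, Arrow.up, c u - 1), (Arrow.down, Arrow.down, c u)} :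
          Set (Arrow × Arrow × ZMod 4))) :
    ∀ u : V, G.dist s u ≤ R →
      ∀ f : ℕ → V, f 0 = s → f (G.dist s u) = u →
        (∀ ℓ : ℕ, ℓ < G.dist s u → G.Adj (f ℓ) (f (ℓ + 1))) →
        (∀ ℓ : ℕ, ℓ ≤ G.dist s u → G.dist s (f ℓ) = ℓ) →
        ∃ a : ℕ, a ≤ G.dist s u ∧
          (∀ ℓ : ℕ, ℓ ≤ a → b (f ℓ) = Arrow.down ∧ c (f ℓ) = c s) ∧
          ∃ c' ∈ ({c s - 1, c s} : Set (ZMod 4)),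
            ∀ ℓ : ℕ, a + 1 ≤ ℓ → ℓ ≤ G.dist s u →
              b (f ℓ) = Arrow.up ∧ c (f ℓ) = c' := by
  intro u hu f hf0 hfd hadj hdist
  suffices key : ∀ n, n ≤ G.dist s u → ∃ a, a ≤ n ∧
      (∀ ℓ : ℕ, ℓ ≤ a → b (f ℓ) = Arrow.down ∧ c (f ℓ) = c s) ∧
      ∃ c' ∈ ({c s - 1, c s} : Set (ZMod 4)),
        ∀ ℓ : ℕ, a + 1 ≤ ℓ → ℓ ≤ n → b (f ℓ) = Arrow.up ∧ c (f ℓ) = c' by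
    exact key _ le_rfl
  intro n
  induction n with
  | zero =>
    intro _
    refine ⟨0, le_rfl, ?_, c s, by simp, fun ℓ h1 h2 => by omega⟩
    intro ℓ hℓ
    interval_cases ℓ
    rw [hf0]
    exact ⟨hbs, rfl⟩
  | succ n ih =>
    intro hn
    obtain ⟨a, ha, hdown, c', hc', hup⟩ := ih (by omega)
    have hadj' := hadj n (by omega)
    have hd1 : G.dist s (f (n+1)) = G.dist s (f n) + 1 := by
      rw [hdist n (by omega), hdist (n+1) hn]
    have hR : G.dist s (f (n+1)) ≤ R := by rw [hdist (n+1) hn]; omega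
    have hc := hcoh (f n) (f (n+1)) hadj' hd1 hR
    simp only [Set.mem_insert_iff, Set.mem_singleton_iff, Prod.mk.injEq] at hc
    by_cases han : a = n
    · -- all down so far; b (f n) = down
      subst han
      have hbn : b (f a) = Arrow.down := (hdown a le_rfl).1
      have hcn : c (f a) = c s := (hdown a le_rfl).2
      rcases hc with ⟨h1, _⟩ | ⟨_, h2, h3⟩ | ⟨_, h2, h3⟩ | ⟨_, h2, h3⟩
      · rw [hbn] at h1; exact absurd h1 (by simp)
      · -- down, up, c s
        refine ⟨a, by omega, hdown, c s, by simp, fun ℓ hℓ1 hℓ2 => ?_⟩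
        have : ℓ = a + 1 := by omega
        subst this
        rw [h3, hcn]
        exact ⟨h2, rfl⟩
      · -- down, up, c s - 1
        refine ⟨a, by omega, hdown, c s - 1, by simp, fun ℓ hℓ1 hℓ2 => ?_⟩
        have : ℓ = a + 1 := by omega
        subst this
        rw [h3, hcn]
        exact ⟨h2, rfl⟩
      · -- down, down, c s
        refine ⟨a + 1, by omega, ?_, c s, by simp, fun ℓ hℓ1 hℓ2 => by omega⟩
        intro ℓ hℓ
        rcases Nat.eq_or_lt_of_le hℓ with h | h
        · subst h
          rw [h3, hcn]
          exact ⟨h2, rfl⟩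
        · exact hdown ℓ (by omega)
    · -- a < n; b (f n) = up, c (f n) = c'
      have hbn := hup n (by omega) le_rfl
      rcases hc with ⟨_, h2, h3⟩ | ⟨h1, _⟩ | ⟨h1, _⟩ | ⟨h1, _⟩
      · refine ⟨a, by omega, hdown, c', hc', fun ℓ hℓ1 hℓ2 => ?_⟩
        rcases Nat.eq_or_lt_of_le hℓ2 with h | h
        · subst h
          rw [h3, hbn.2]
          exact ⟨h2, rfl⟩
        · exact hup ℓ hℓ1 (by omega)
      all_goals (rw [hbn.1] at h1; exact absurd h1 (by simp))
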